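/- For dependence logic FO(dep) (a downwards closed logic), compactness for formulas is equivalent to compactness for sentences: the statement 'for every vocabulary τ, every set Γ of FO(dep) τ-formulas all of whose finite subsets are satisfiable by a nonempty team is satisfiable by a nonempty team' holds if and only if the statement 'for every vocabulary τ, every set Γ of FO(dep) τ-sentences all of whose finite subsets are satisfiable by a nonempty team is satisfiable by a nonempty team' holds. -/

import Mathlib

universe u v w

open FirstOrder FirstOrder.Language Filter

namespace TeamSemantics

/-- The supplemented team `X(F/x) = {s(a/x) : s ∈ X, a ∈ F(s)}`. -/
def supFun {V M : Type*} [DecidableEq V] (X : Set (V → M)) (x : V) (F : (V → M) → Set M) :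
    Set (V → M) :=
  {t | ∃ s ∈ X, ∃ a ∈ F s, t = Function.update s x a}

/-- The team `X(a/x) = {s(a/x) : s ∈ X}`. -/
def supElt {V M : Type*} [DecidableEq V] (X : Set (V → M)) (x : V) (a : M) : Set (V → M) :=
  {t | ∃ s ∈ X, t = Function.update s x a}

/-- The duplicated team `X(M/x) = {s(a/x) : s ∈ X, a ∈ M}`. -/
def dup {V M : Type*} [DecidableEq V] (X : Set (V → M)) (x : V) : Set (V → M) :=
  {t | ∃ s ∈ X, ∃ a : M, t = Function.update s x a}

/-- Formulas of dependence logic `FO(dep)` over the vocabulary `L`, with variables from `V`,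
in negation normal form: first-order literals and dependence atoms, closed under
`∧`, `∨`, `∃`, `∀`. -/
inductive DepFormula (L : FirstOrder.Language.{u, u}) (V : Type v) : Type (max u v) where
  | equal : L.Term V → L.Term V → DepFormula L V
  | nequal : L.Term V → L.Term V → DepFormula L V
  | rel : ∀ {n : ℕ}, L.Relations n → (Fin n → L.Term V) → DepFormula L V
  | nrel : ∀ {n : ℕ}, L.Relations n → (Fin n → L.Term V) → DepFormula L V
  | dep : ∀ {n : ℕ}, (Fin n → V) → V → DepFormula L V
  | and : DepFormula L V → DepFormula L V → DepFormula L V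
  | or : DepFormula L V → DepFormula L V → DepFormula L V
  | ex : V → DepFormula L V → DepFormula L V
  | all : V → DepFormula L V → DepFormula L V

/-- Lax team semantics `M ⊨_X φ` for dependence logic. -/
def Models {L : FirstOrder.Language.{u, u}} {V : Type v} [DecidableEq V]
    (M : Type w) [str : L.Structure M] :
    DepFormula L V → Set (V → M) → Prop
  | .equal t₁ t₂, X => ∀ s ∈ X, t₁.realize s = t₂.realize s
  | .nequal t₁ t₂, X => ∀ s ∈ X, t₁.realize s ≠ t₂.realize s
  | .rel R ts, X => ∀ s ∈ X, Structure.RelMap R (fun k => (ts k).realize s)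
  | .nrel R ts, X => ∀ s ∈ X, ¬ Structure.RelMap R (fun k => (ts k).realize s)
  | .dep xs y, X => ∀ s ∈ X, ∀ s' ∈ X, (∀ k, s (xs k) = s' (xs k)) → s y = s' y
  | .and φ ψ, X => Models M φ X ∧ Models M ψ X
  | .or φ ψ, X => ∃ Y Z, Y ∪ Z = X ∧ Models M φ Y ∧ Models M ψ Z
  | .ex x φ, X => ∃ F : (V → M) → Set M, (∀ s ∈ X, (F s).Nonempty) ∧ Models M φ (supFun X x F)
  | .all x φ, X => Models M φ (dup X x)

/-- The set of free variables of a formula of dependence logic. -/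
def freeVars {L : FirstOrder.Language.{u, u}} {V : Type v} [DecidableEq V] :
    DepFormula L V → Set V
  | .equal t₁ t₂ => ↑t₁.varFinset ∪ ↑t₂.varFinset
  | .nequal t₁ t₂ => ↑t₁.varFinset ∪ ↑t₂.varFinset
  | .rel _ ts => ⋃ k, ↑(ts k).varFinset
  | .nrel _ ts => ⋃ k, ↑(ts k).varFinset
  | .dep xs y => Set.range xs ∪ {y}
  | .and φ ψ => freeVars φ ∪ freeVars ψ
  | .or φ ψ => freeVars φ ∪ freeVars ψ
  | .ex x φ => freeVars φ \ {x}
  | .all x φ => freeVars φ \ {x}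

/-- A sentence of dependence logic is a formula with no free variables. -/
def IsSentence {L : FirstOrder.Language.{u, u}} {V : Type v} [DecidableEq V]
    (φ : DepFormula L V) : Prop :=
  freeVars φ = ∅

/-- A set of formulas of dependence logic is satisfiable if some structure together with
some nonempty team satisfies all of its members. -/
def Satisfiable {L : FirstOrder.Language.{u, u}} {V : Type u} [DecidableEq V]
    (Γ : Set (DepFormula L V)) : Prop :=
  ∃ (M : Type u) (str : L.Structure M) (X : Set (V → M)),
    X.Nonempty ∧ ∀ φ ∈ Γ, Models (str := str) M φ X

/-!
Add a fresh constant `c_v` for every variable `v` and replace each formula `φ` by the sentence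
`∃ v₁ (v₁ = c_{v₁} ∧ … ∃ vₙ (vₙ = c_{vₙ} ∧ φ))`, where `v₁, …, vₙ` are the free variables of `φ`.
By locality, a nonempty team satisfies this sentence iff the singleton team `{v ↦ c_v}`
satisfies `φ`. Hence any model of a set of formulas, cut down to one of its assignments by
downward closure, yields a model of the corresponding sentences, and conversely the constants of
a model of the sentences form an assignment satisfying all the formulas.
-/

section Semantics

variable {L : FirstOrder.Language.{u, u}} {V : Type v} [DecidableEq V] {M : Type w}

theorem supFun_mono {X Y : Set (V → M)} (h : X ⊆ Y) (x : V) (F : (V → M) → Set M) :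
    supFun X x F ⊆ supFun Y x F := by
  rintro _ ⟨s, hs, a, ha, rfl⟩
  exact ⟨s, h hs, a, ha, rfl⟩

theorem dup_mono {X Y : Set (V → M)} (h : X ⊆ Y) (x : V) : dup X x ⊆ dup Y x := by
  rintro _ ⟨s, hs, a, rfl⟩
  exact ⟨s, h hs, a, rfl⟩

theorem supFun_eq_supElt {X : Set (V → M)} {x : V} {F : (V → M) → Set M} {a : M}
    (hF : ∀ s ∈ X, F s = {a}) : supFun X x F = supElt X x a := by
  ext t
  constructor
  · rintro ⟨s, hs, b, hb, rfl⟩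
    rw [hF s hs, Set.mem_singleton_iff] at hb
    exact ⟨s, hs, hb ▸ rfl⟩
  · rintro ⟨s, hs, rfl⟩
    exact ⟨s, hs, a, (hF s hs).symm ▸ rfl, rfl⟩

theorem supElt_eq_image (X : Set (V → M)) (x : V) (a : M) :
    supElt X x a = (Function.update · x a) '' X := by
  ext t
  simp only [supElt, Set.mem_ofPred_eq, Set.mem_image, eq_comm]

variable [L.Structure M]

theorem realize_congr_of_eqOn {t : L.Term V} {s s' : V → M} (h : Set.EqOn s s' t.varFinset) :
    t.realize s = t.realize s' := by
  rw [← Term.realize_restrictVar' subset_rfl (v := s),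
    ← Term.realize_restrictVar' subset_rfl (v := s')]
  congr 1
  funext ⟨v, hv⟩
  exact h hv

theorem models_anti {φ : DepFormula L V} {X Y : Set (V → M)} (hXY : X ⊆ Y)
    (h : Models M φ Y) : Models M φ X := by
  induction φ generalizing X Y with
  | equal | nequal | rel | nrel => exact fun s hs => h s (hXY hs)
  | dep xs y => exact fun s hs s' hs' => h s (hXY hs) s' (hXY hs')
  | and φ ψ ihφ ihψ => exact ⟨ihφ hXY h.1, ihψ hXY h.2⟩
  | or φ ψ ihφ ihψ =>
    obtain ⟨Y₁, Y₂, rfl, h₁, h₂⟩ := h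
    refine ⟨X ∩ Y₁, X ∩ Y₂, ?_, ihφ Set.inter_subset_right h₁, ihψ Set.inter_subset_right h₂⟩
    rw [← Set.inter_union_distrib_left, Set.inter_eq_left.mpr hXY]
  | ex x φ ih =>
    obtain ⟨F, hF, hφ⟩ := h
    exact ⟨F, fun s hs => hF s (hXY hs), ih (supFun_mono hXY x F) hφ⟩
  | all x φ ih => exact ih (dup_mono hXY x) h

theorem models_ex_eq_and_iff {x : V} {t : L.Term V} {a : M} (ht : ∀ s : V → M, t.realize s = a)
    {ψ : DepFormula L V} {X : Set (V → M)} :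
    Models M (.ex x (.and (.equal (.var x) t) ψ)) X ↔ Models M ψ (supElt X x a) := by
  constructor
  · rintro ⟨F, hF, hx, hψ⟩
    have hFa : ∀ s ∈ X, F s = {a} := fun s hs =>
      Set.eq_singleton_iff_nonempty_unique_mem.mpr ⟨hF s hs, fun b hb => by
        simpa [ht] using hx _ ⟨s, hs, b, hb, rfl⟩⟩
    rwa [← supFun_eq_supElt hFa]
  · intro hψ
    refine ⟨fun _ => {a}, fun _ _ => Set.singleton_nonempty a, ?_, ?_⟩
    · rintro _ ⟨s, -, b, rfl, rfl⟩
      simp [ht]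
    · rwa [supFun_eq_supElt fun _ _ => rfl]

end Semantics

section Locality

variable {V : Type v} {M : Type w}

def Agrees (A : Set V) (X Y : Set (V → M)) : Prop :=
  (∀ s ∈ X, ∃ t ∈ Y, Set.EqOn s t A) ∧ ∀ t ∈ Y, ∃ s ∈ X, Set.EqOn s t A

theorem Agrees.symm {A : Set V} {X Y : Set (V → M)} (h : Agrees A X Y) : Agrees A Y X :=
  ⟨fun t ht => (h.2 t ht).imp fun _ hs => ⟨hs.1, hs.2.symm⟩,
    fun s hs => (h.1 s hs).imp fun _ ht => ⟨ht.1, ht.2.symm⟩⟩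

theorem eqOn_update_insert [DecidableEq V] {A : Set V} {s t : V → M} (h : Set.EqOn s t A)
    (x : V) (a : M) :
    Set.EqOn (Function.update s x a) (Function.update t x a) (insert x A) := by
  rintro v (rfl | hv)
  · simp
  · by_cases hvx : v = x
    · simp [hvx]
    · simp [Function.update_of_ne hvx, h hv]

theorem Agrees.dup [DecidableEq V] {A : Set V} {X Y : Set (V → M)} (h : Agrees A X Y) (x : V) :
    Agrees (insert x A) (dup X x) (dup Y x) := by
  refine ⟨?_, ?_⟩
  · rintro _ ⟨s, hs, a, rfl⟩
    obtain ⟨t, ht, hst⟩ := h.1 s hs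
    exact ⟨_, ⟨t, ht, a, rfl⟩, eqOn_update_insert hst x a⟩
  · rintro _ ⟨t, ht, a, rfl⟩
    obtain ⟨s, hs, hst⟩ := h.2 t ht
    exact ⟨_, ⟨s, hs, a, rfl⟩, eqOn_update_insert hst x a⟩

/-- An assignment of a team agreeing with `X` on `A` may use the witnesses `F` of every
assignment of `X` that it agrees with. -/
def transportWitnesses (A : Set V) (X : Set (V → M)) (F : (V → M) → Set M) :
    (V → M) → Set M :=
  fun t => {a | ∃ s ∈ X, Set.EqOn s t A ∧ a ∈ F s}

theorem Agrees.supFun [DecidableEq V] {A : Set V} {X Y : Set (V → M)} (h : Agrees A X Y) (x : V)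
    (F : (V → M) → Set M) :
    Agrees (insert x A) (supFun X x F) (supFun Y x (transportWitnesses A X F)) := by
  refine ⟨?_, ?_⟩
  · rintro _ ⟨s, hs, a, ha, rfl⟩
    obtain ⟨t, ht, hst⟩ := h.1 s hs
    exact ⟨_, ⟨t, ht, a, ⟨s, hs, hst, ha⟩, rfl⟩, eqOn_update_insert hst x a⟩
  · rintro _ ⟨t, -, a, ⟨s, hs, hst, ha⟩, rfl⟩
    exact ⟨_, ⟨s, hs, a, ha, rfl⟩, eqOn_update_insert hst x a⟩

theorem Agrees.union_sep {A : Set V} {X₁ X₂ Y : Set (V → M)} (h : Agrees A (X₁ ∪ X₂) Y) :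
    {t ∈ Y | ∃ s ∈ X₁, Set.EqOn s t A} ∪ {t ∈ Y | ∃ s ∈ X₂, Set.EqOn s t A} = Y := by
  refine Set.union_subset (Set.sep_subset _ _) (Set.sep_subset _ _) |>.antisymm fun t ht => ?_
  obtain ⟨s, hs | hs, hst⟩ := h.2 t ht
  exacts [Or.inl ⟨ht, s, hs, hst⟩, Or.inr ⟨ht, s, hs, hst⟩]

theorem Agrees.sep {A : Set V} {X X' Y : Set (V → M)} (h : Agrees A X Y) (hX' : X' ⊆ X) :
    Agrees A X' {t ∈ Y | ∃ s ∈ X', Set.EqOn s t A} := by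
  refine ⟨fun s hs => ?_, fun t ⟨_, hs⟩ => hs⟩
  obtain ⟨t, ht, hst⟩ := h.1 s (hX' hs)
  exact ⟨t, ⟨ht, s, hs, hst⟩, hst⟩

theorem Agrees.forall_mem {A : Set V} {X Y : Set (V → M)} (h : Agrees A X Y) {P : (V → M) → Prop}
    (hP : ∀ s t, Set.EqOn s t A → P s → P t) (hX : ∀ s ∈ X, P s) : ∀ t ∈ Y, P t := by
  intro t ht
  obtain ⟨s, hs, hst⟩ := h.2 t ht
  exact hP s t hst (hX s hs)

variable {L : FirstOrder.Language.{u, u}} [DecidableEq V] [L.Structure M]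

theorem Agrees.models {φ : DepFormula L V} {A : Set V} (hA : freeVars φ ⊆ A)
    {X Y : Set (V → M)} (hXY : Agrees A X Y) (h : Models M φ X) : Models M φ Y := by
  induction φ generalizing A X Y with
  | equal t₁ t₂ | nequal t₁ t₂ =>
    refine hXY.forall_mem (fun s s' e => ?_) h
    rw [realize_congr_of_eqOn (e.mono (Set.subset_union_left.trans hA)),
      realize_congr_of_eqOn (e.mono (Set.subset_union_right.trans hA))]
    exact id
  | rel R ts | nrel R ts =>
    refine hXY.forall_mem (fun s s' e => ?_) h
    rw [funext fun k => realize_congr_of_eqOn (t := ts k)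
      (e.mono ((Set.subset_iUnion (fun k => (↑(ts k).varFinset : Set V)) k).trans hA))]
    exact id
  | dep xs y =>
    intro t ht t' ht' hxs
    obtain ⟨s, hs, e⟩ := hXY.2 t ht
    obtain ⟨s', hs', e'⟩ := hXY.2 t' ht'
    have hx : ∀ k, xs k ∈ A := fun k => hA (Or.inl ⟨k, rfl⟩)
    have hy : y ∈ A := hA (Or.inr rfl)
    rw [← e hy, ← e' hy]
    exact h s hs s' hs' fun k => by rw [e (hx k), e' (hx k)]; exact hxs k
  | and φ ψ ihφ ihψ =>
    exact ⟨ihφ (Set.subset_union_left.trans hA) hXY h.1,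
      ihψ (Set.subset_union_right.trans hA) hXY h.2⟩
  | or φ ψ ihφ ihψ =>
    obtain ⟨X₁, X₂, rfl, h₁, h₂⟩ := h
    exact ⟨_, _, hXY.union_sep,
      ihφ (Set.subset_union_left.trans hA) (hXY.sep Set.subset_union_left) h₁,
      ihψ (Set.subset_union_right.trans hA) (hXY.sep Set.subset_union_right) h₂⟩
  | ex x φ ih =>
    obtain ⟨F, hF, hφ⟩ := h
    refine ⟨transportWitnesses A X F, fun t ht => ?_,
      ih (Set.sdiff_singleton_subset_iff.1 hA) (hXY.supFun x F) hφ⟩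
    obtain ⟨s, hs, hst⟩ := hXY.2 t ht
    obtain ⟨a, ha⟩ := hF s hs
    exact ⟨a, s, hs, hst, ha⟩
  | all x φ ih => exact ih (Set.sdiff_singleton_subset_iff.1 hA) (hXY.dup x) h

end Locality

end TeamSemantics

namespace FirstOrder.Language.LHom

open TeamSemantics

variable {L L' : FirstOrder.Language.{u, u}} {V : Type v} {M : Type w}

def onDepFormula (g : L →ᴸ L') : DepFormula L V → DepFormula L' V
  | .equal t₁ t₂ => .equal (g.onTerm t₁) (g.onTerm t₂)
  | .nequal t₁ t₂ => .nequal (g.onTerm t₁) (g.onTerm t₂)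
  | .rel R ts => .rel (g.onRelation R) fun i => g.onTerm (ts i)
  | .nrel R ts => .nrel (g.onRelation R) fun i => g.onTerm (ts i)
  | .dep xs y => .dep xs y
  | .and φ ψ => .and (g.onDepFormula φ) (g.onDepFormula ψ)
  | .or φ ψ => .or (g.onDepFormula φ) (g.onDepFormula ψ)
  | .ex x φ => .ex x (g.onDepFormula φ)
  | .all x φ => .all x (g.onDepFormula φ)

variable [DecidableEq V]

theorem varFinset_onTerm (g : L →ᴸ L') (t : L.Term V) : (g.onTerm t).varFinset = t.varFinset := by
  induction t with
  | var v => rfl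
  | func f ts ih => simp only [onTerm, Term.varFinset, ih]

theorem freeVars_onDepFormula (g : L →ᴸ L') (φ : DepFormula L V) :
    freeVars (g.onDepFormula φ) = freeVars φ := by
  induction φ with
  | dep xs y => rfl
  | and _ _ ihφ ihψ | or _ _ ihφ ihψ => simp only [onDepFormula, freeVars, ihφ, ihψ]
  | ex _ _ ih | all _ _ ih => simp only [onDepFormula, freeVars, ih]
  | _ => simp [onDepFormula, freeVars, varFinset_onTerm]

theorem models_onDepFormula [L.Structure M] [L'.Structure M] (g : L →ᴸ L') [g.IsExpansionOn M]
    (φ : DepFormula L V) (X : Set (V → M)) : Models M (g.onDepFormula φ) X ↔ Models M φ X := by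
  induction φ generalizing X with
  | dep xs y => rfl
  | and _ _ ihφ ihψ | or _ _ ihφ ihψ => simp only [onDepFormula, Models, ihφ, ihψ]
  | ex _ _ ih | all _ _ ih => simp only [onDepFormula, Models, ih]
  | _ => simp [onDepFormula, Models, realize_onTerm, map_onRelation]

end FirstOrder.Language.LHom

namespace TeamSemantics

section Pin

variable {L : FirstOrder.Language.{u, u}} {V : Type v} [DecidableEq V] {M : Type w}

theorem freeVars_finite (φ : DepFormula L V) : (freeVars φ).Finite := by
  induction φ with
  | equal t₁ t₂ | nequal t₁ t₂ => exact t₁.varFinset.finite_toSet.union t₂.varFinset.finite_toSet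
  | rel R ts | nrel R ts => exact Set.finite_iUnion fun k => (ts k).varFinset.finite_toSet
  | dep xs y => exact (Set.finite_range xs).union (Set.finite_singleton y)
  | and _ _ ihφ ihψ | or _ _ ihφ ihψ => exact ihφ.union ihψ
  | ex _ _ ih | all _ _ ih => exact ih.sdiff

noncomputable def freeVarList (φ : DepFormula L V) : List V :=
  (freeVars_finite φ).toFinset.toList

theorem freeVars_subset_freeVarList (φ : DepFormula L V) : freeVars φ ⊆ {v | v ∈ freeVarList φ} :=
  fun v hv => by simpa [freeVarList] using hv

def pin (c : V → L.Term V) : List V → DepFormula L V → DepFormula L V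
  | [], ψ => ψ
  | v :: l, ψ => .ex v (.and (.equal (.var v) (c v)) (pin c l ψ))

theorem freeVars_pin {c : V → L.Term V} (hc : ∀ v, (c v).varFinset = ∅) (l : List V)
    (ψ : DepFormula L V) : freeVars (pin c l ψ) = freeVars ψ \ {v | v ∈ l} := by
  induction l with
  | nil => simp [pin]
  | cons v l ih =>
    ext w
    by_cases hwv : w = v <;> simp [pin, freeVars, ih, hc, Term.varFinset, hwv]

def pinTeam (c : V → M) (l : List V) (X : Set (V → M)) : Set (V → M) :=
  (fun s w => if w ∈ l then c w else s w) '' X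

theorem pinTeam_supElt (c : V → M) (v : V) (l : List V) (X : Set (V → M)) :
    pinTeam c l (supElt X v (c v)) = pinTeam c (v :: l) X := by
  rw [pinTeam, supElt_eq_image, Set.image_image, pinTeam]
  congr 1
  ext s w
  by_cases hwl : w ∈ l <;> by_cases hwv : w = v <;> simp [hwl, hwv]

theorem agrees_pinTeam_singleton {c : V → M} {l : List V} {X : Set (V → M)} (hX : X.Nonempty) :
    Agrees {v | v ∈ l} (pinTeam c l X) {c} := by
  obtain ⟨s, hs⟩ := hX
  refine ⟨?_, fun _ ht => ⟨_, ⟨s, hs, rfl⟩, ?_⟩⟩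
  · rintro _ ⟨s, -, rfl⟩
    exact ⟨c, rfl, fun w hw => if_pos hw⟩
  · rw [Set.eq_of_mem_singleton ht]
    exact fun w hw => if_pos hw

variable [L.Structure M]

theorem models_pin_iff {c : V → L.Term V} {a : V → M} (hc : ∀ v (s : V → M), (c v).realize s = a v)
    (l : List V) (ψ : DepFormula L V) (X : Set (V → M)) :
    Models M (pin c l ψ) X ↔ Models M ψ (pinTeam a l X) := by
  induction l generalizing X with
  | nil => simp [pin, pinTeam]
  | cons v l ih => rw [pin, models_ex_eq_and_iff (hc v), ih, pinTeam_supElt]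

theorem models_pin_iff_singleton {c : V → L.Term V} {a : V → M}
    (hc : ∀ v (s : V → M), (c v).realize s = a v) {l : List V} {ψ : DepFormula L V}
    (hψ : freeVars ψ ⊆ {v | v ∈ l}) {X : Set (V → M)} (hX : X.Nonempty) :
    Models M (pin c l ψ) X ↔ Models M ψ {a} := by
  rw [models_pin_iff hc]
  exact ⟨(agrees_pinTeam_singleton hX).models hψ, (agrees_pinTeam_singleton hX).symm.models hψ⟩

end Pin

section ConstClosure

variable {L : FirstOrder.Language.{u, u}} {V : Type u} [DecidableEq V]

theorem Satisfiable.mono {Γ Δ : Set (DepFormula L V)} (h : Satisfiable Γ) (hΔ : Δ ⊆ Γ) :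
    Satisfiable Δ :=
  let ⟨M, str, X, hX, hΓ⟩ := h
  ⟨M, str, X, hX, fun φ hφ => hΓ φ (hΔ hφ)⟩

noncomputable def constClosure (φ : DepFormula L V) : DepFormula L[[V]] V :=
  pin (fun v => (L.con v).term) (freeVarList φ) ((L.lhomWithConstants V).onDepFormula φ)

theorem isSentence_constClosure (φ : DepFormula L V) : IsSentence (constClosure φ) := by
  rw [IsSentence, constClosure, freeVars_pin (fun _ => by simp [Constants.term, Term.varFinset]),
    LHom.freeVars_onDepFormula, Set.sdiff_eq_empty]
  exact freeVars_subset_freeVarList φ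

theorem models_constClosure_iff {M : Type w} [L.Structure M] [L[[V]].Structure M]
    [(L.lhomWithConstants V).IsExpansionOn M] {φ : DepFormula L V} {X : Set (V → M)}
    (hX : X.Nonempty) :
    Models M (constClosure φ) X ↔ Models M φ {fun v => ((L.con v : L[[V]].Constants) : M)} := by
  have hφ := (LHom.freeVars_onDepFormula (L.lhomWithConstants V) φ).trans_subset
    (freeVars_subset_freeVarList φ)
  rw [constClosure, models_pin_iff_singleton (fun _ _ => Term.realize_constants) hφ hX,
    LHom.models_onDepFormula]

theorem satisfiable_image_constClosure_iff {Γ : Set (DepFormula L V)} :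
    Satisfiable (constClosure '' Γ) ↔ Satisfiable Γ := by
  constructor
  · rintro ⟨N, str, X, hX, hΓ⟩
    let _ : L.Structure N := (L.lhomWithConstants V).reduct N
    exact ⟨N, inferInstance, _, Set.singleton_nonempty _,
      fun φ hφ => (models_constClosure_iff hX).1 (hΓ _ ⟨φ, hφ, rfl⟩)⟩
  · rintro ⟨M, str, X, ⟨s, hs⟩, hΓ⟩
    let _ : (constantsOn V).Structure M := constantsOn.structure s
    refine ⟨M, inferInstance, X, ⟨s, hs⟩, ?_⟩
    rintro _ ⟨φ, hφ, rfl⟩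
    exact (models_constClosure_iff ⟨s, hs⟩).2
      (models_anti (Set.singleton_subset_iff.2 hs) (hΓ φ hφ))

end ConstClosure

/-- For dependence logic (a downwards closed logic), compactness for arbitrary sets of
formulas is equivalent to compactness for sets of sentences. -/
theorem depLogic_compactness_formulas_iff_compactness_sentences :
    (∀ (L : FirstOrder.Language.{u, u}) (V : Type u) (_ : DecidableEq V)
        (Γ : Set (DepFormula L V)),
        (∀ Γ₀ ⊆ Γ, Γ₀.Finite → Satisfiable Γ₀) → Satisfiable Γ) ↔
    (∀ (L : FirstOrder.Language.{u, u}) (V : Type u) (_ : DecidableEq V)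
        (Γ : Set (DepFormula L V)),
        (∀ φ ∈ Γ, IsSentence φ) →
        (∀ Γ₀ ⊆ Γ, Γ₀.Finite → Satisfiable Γ₀) → Satisfiable Γ) := by
  refine ⟨fun h L V _ Γ _ hfin => h L V _ Γ hfin, fun h L V _ Γ hfin => ?_⟩
  refine satisfiable_image_constClosure_iff.1 (h _ V _ _ ?_ fun Δ hΔ hΔfin => ?_)
  · rintro _ ⟨φ, -, rfl⟩
    exact isSentence_constClosure φ
  · obtain ⟨Γ₀, hΓ₀, hΓ₀fin, hΔΓ₀⟩ :=
      Set.exists_subset_image_finite_and.1 ⟨Δ, hΔ, hΔfin, subset_rfl⟩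
    exact (satisfiable_image_constClosure_iff.2 (hfin Γ₀ hΓ₀ hΓ₀fin)).mono hΔΓ₀

end TeamSemantics
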